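/- arXiv:2210.14892 — 8 statements merged into one kernel-verified Lean document; each statement's English description precedes it below -/
import Mathlib

section
/- Let x₀ ∈ ℝ, b > 0, B > 0, and let a : ℕ → ℂ be such that the series ∑ₖ a_k x^k converges to f(x₀ + x) for every x ∈ (−b, b), and ∑ₖ |a_k| b^k ≤ B (with this series summable). Then there exists a sequence c : ℕ → ℂ such that: (i) for every y ∈ (−1, 1) the series ∑ₖ c_k y^k converges to g(y) := f(x₀ + (2b/π)·arcsin(y)); (ii) ∑ₖ |c_k| ≤ B; and (iii) for every δ > 0, every ν ∈ (0, 1], and every natural number T with T ≥ ln(B/δ)/ν, one has |g(y) − ∑_{k=0}^{T−1} c_k y^k| ≤ δ for all y ∈ [−1+ν, 1−ν]. -/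
/-!
Write `u y = (2b/π) arcsin y`. The Maclaurin series `arcsin y = ∑ αₙ yⁿ` has nonnegative
coefficients (`arcsin' = (1 - y²)^(-1/2)` is a binomial series with positive coefficients), and
letting `y → 1⁻` gives `∑ αₙ ≤ π/2`. Hence `u y = ∑ dⱼ yʲ` with `dⱼ ≥ 0`, `∑ dⱼ ≤ b`, and
`|u y| < b` on `(-1, 1)`. Expanding `f (x₀ + u y) = ∑ₖ aₖ (u y)ᵏ` and collecting powers of `y` gives
`cₙ = ∑ₖ aₖ [yⁿ] uᵏ`. Since every `[yⁿ] uᵏ` is nonnegative with `∑ₙ [yⁿ] uᵏ = (∑ dⱼ)ᵏ ≤ bᵏ`, the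
double series is absolutely convergent for `|y| ≤ 1`, which justifies the rearrangement and gives
`∑ |cₙ| ≤ ∑ |aₖ| bᵏ ≤ B`. On `|y| ≤ 1 - ν` the tail after `T` terms is then at most
`B (1 - ν)ᵀ ≤ B e^(-νT) ≤ δ`.
-/

open Real Set Finset

open scoped PowerSeries

namespace PowerSeries

variable {R : Type*}

theorem coeff_pow_nonneg [CommSemiring R] [PartialOrder R] [IsOrderedRing R] {p : R⟦X⟧}
    (hp : ∀ n, 0 ≤ coeff n p) (k n : ℕ) : 0 ≤ coeff n (p ^ k) := by
  induction k generalizing n with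
  | zero => rw [pow_zero, coeff_one]; split_ifs <;> simp
  | succ k ih =>
    rw [pow_succ, coeff_mul]
    exact sum_nonneg fun ij _ => mul_nonneg (ih _) (hp _)

theorem coeff_mul_mul_pow [CommSemiring R] (p q : R⟦X⟧) (z : R) (n : ℕ) :
    coeff n (p * q) * z ^ n =
      ∑ ij ∈ antidiagonal n, (coeff ij.1 p * z ^ ij.1) * (coeff ij.2 q * z ^ ij.2) := by
  rw [coeff_mul, sum_mul]
  refine sum_congr rfl fun ij hij => ?_
  rw [← mem_antidiagonal.1 hij, pow_add]
  ring

variable [NormedCommRing R] {p : R⟦X⟧} {z : R}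

theorem summable_norm_coeff_pow_mul_pow (hp : Summable fun n => ‖coeff n p * z ^ n‖) (k : ℕ) :
    Summable fun n => ‖coeff n (p ^ k) * z ^ n‖ := by
  induction k with
  | zero =>
    refine summable_of_ne_finset_zero (s := {0}) fun n hn => ?_
    rw [pow_zero, coeff_one, if_neg (Finset.notMem_singleton.1 hn), zero_mul, norm_zero]
  | succ k ih =>
    have h := summable_norm_sum_mul_antidiagonal_of_summable_norm ih hp
    simpa only [pow_succ p k, coeff_mul_mul_pow] using h

theorem hasSum_coeff_pow_mul_pow [CompleteSpace R] (hp : Summable fun n => ‖coeff n p * z ^ n‖)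
    (k : ℕ) : HasSum (fun n => coeff n (p ^ k) * z ^ n) ((∑' n, coeff n p * z ^ n) ^ k) := by
  induction k with
  | zero =>
    convert hasSum_single (f := fun n => coeff n (p ^ 0) * z ^ n) 0 fun n hn => ?_
    · simp
    · rw [pow_zero, coeff_one, if_neg hn, zero_mul]
  | succ k ih =>
    have hk := summable_norm_coeff_pow_mul_pow hp k
    have h := (summable_norm_sum_mul_antidiagonal_of_summable_norm hk hp).of_norm.hasSum
    rw [← tsum_mul_tsum_eq_tsum_sum_antidiagonal_of_summable_norm hk hp, ih.tsum_eq] at h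
    simpa only [pow_succ p k, coeff_mul_mul_pow, pow_succ _ k] using h

end PowerSeries

section Composition

open PowerSeries

variable {a : ℕ → ℂ} {d : ℕ → ℝ}

noncomputable def compCoeff (a : ℕ → ℂ) (d : ℕ → ℝ) (n : ℕ) : ℂ :=
  ∑' k, a k * ((coeff n (mk d ^ k) : ℝ) : ℂ)

theorem coeff_mk_pow_nonneg (hd : ∀ j, 0 ≤ d j) (k n : ℕ) : 0 ≤ coeff n (mk d ^ k) :=
  coeff_pow_nonneg (fun j => (coeff_mk j d).symm ▸ hd j) k n

theorem hasSum_coeff_mk_pow_mul_pow (hd : ∀ j, 0 ≤ d j) (hds : Summable d) {y : ℝ}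
    (hy : |y| ≤ 1) (k : ℕ) :
    HasSum (fun n => coeff n (mk d ^ k) * y ^ n) ((∑' j, d j * y ^ j) ^ k) := by
  have hnorm : Summable fun j => ‖coeff j (mk d) * y ^ j‖ := by
    refine hds.of_nonneg_of_le (fun _ => norm_nonneg _) fun j => ?_
    rw [coeff_mk, norm_mul, norm_pow, Real.norm_of_nonneg (hd j), Real.norm_eq_abs]
    exact mul_le_of_le_one_right (hd j) (pow_le_one₀ (abs_nonneg y) hy)
  simpa only [coeff_mk] using hasSum_coeff_pow_mul_pow hnorm k

theorem hasSum_coeff_mk_pow (hd : ∀ j, 0 ≤ d j) (hds : Summable d) (k : ℕ) :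
    HasSum (fun n => coeff n (mk d ^ k)) ((∑' j, d j) ^ k) := by
  simpa using hasSum_coeff_mk_pow_mul_pow hd hds (y := 1) (by simp) k

theorem summable_norm_mul_coeff_mk_pow (hd : ∀ j, 0 ≤ d j) (hds : Summable d)
    (ha : Summable fun k => ‖a k‖ * (∑' j, d j) ^ k) :
    Summable fun kn : ℕ × ℕ => ‖a kn.1‖ * coeff kn.2 (mk d ^ kn.1) := by
  have hfiber k := (hasSum_coeff_mk_pow hd hds k).mul_left ‖a k‖
  refine (summable_prod_of_nonneg fun kn => ?_).2
    ⟨fun k => (hfiber k).summable, ha.congr fun k => (hfiber k).tsum_eq.symm⟩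
  exact mul_nonneg (norm_nonneg _) (coeff_mk_pow_nonneg hd _ _)

theorem hasSum_compCoeff_mul_pow (hd : ∀ j, 0 ≤ d j) (hds : Summable d)
    (ha : Summable fun k => ‖a k‖ * (∑' j, d j) ^ k) {y : ℝ} (hy : |y| ≤ 1) :
    HasSum (fun n => compCoeff a d n * (y : ℂ) ^ n)
      (∑' k, a k * ((∑' j, d j * y ^ j : ℝ) : ℂ) ^ k) := by
  set G : ℕ × ℕ → ℂ := fun kn => a kn.1 * ((coeff kn.2 (mk d ^ kn.1) : ℝ) : ℂ) * (y : ℂ) ^ kn.2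
  have hG : Summable G := by
    refine .of_norm_bounded (summable_norm_mul_coeff_mk_pow hd hds ha) fun kn => ?_
    rw [norm_mul, norm_mul, norm_pow, Complex.norm_real, Complex.norm_real, Real.norm_eq_abs,
      Real.norm_eq_abs, abs_of_nonneg (coeff_mk_pow_nonneg hd _ _)]
    exact mul_le_of_le_one_right (mul_nonneg (norm_nonneg _) (coeff_mk_pow_nonneg hd _ _))
      (pow_le_one₀ (abs_nonneg y) hy)
  have hrows k : HasSum (fun n => G (k, n)) (a k * ((∑' j, d j * y ^ j : ℝ) : ℂ) ^ k) := by
    have h := (Complex.hasSum_ofReal.2 (hasSum_coeff_mk_pow_mul_pow hd hds hy k)).mul_left (a k)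
    simp only [Complex.ofReal_mul, Complex.ofReal_pow] at h
    simpa only [G, mul_assoc] using h
  have hcols n : HasSum (fun k => G (k, n)) (compCoeff a d n * (y : ℂ) ^ n) := by
    have h := (hG.prod_symm.prod_factor n).hasSum
    simp only [Prod.swap_prod_mk, G, tsum_mul_right] at h
    exact h
  rw [(hG.hasSum.prod_fiberwise hrows).tsum_eq, ← (Equiv.prodComm ℕ ℕ).tsum_eq G]
  exact hG.prod_symm.hasSum.prod_fiberwise hcols

theorem norm_compCoeff_le (hd : ∀ j, 0 ≤ d j) (hds : Summable d)
    (ha : Summable fun k => ‖a k‖ * (∑' j, d j) ^ k) (n : ℕ) :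
    ‖compCoeff a d n‖ ≤ ∑' k, ‖a k‖ * coeff n (mk d ^ k) := by
  have hnorm k : ‖a k * ((coeff n (mk d ^ k) : ℝ) : ℂ)‖ = ‖a k‖ * coeff n (mk d ^ k) := by
    rw [norm_mul, Complex.norm_real, Real.norm_of_nonneg (coeff_mk_pow_nonneg hd k n)]
  simp_rw [← hnorm]
  refine norm_tsum_le_tsum_norm ?_
  simpa only [hnorm, Prod.swap_prod_mk] using
    (summable_norm_mul_coeff_mk_pow hd hds ha).prod_symm.prod_factor n

theorem hasSum_tsum_norm_mul_coeff_mk_pow (hd : ∀ j, 0 ≤ d j) (hds : Summable d)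
    (ha : Summable fun k => ‖a k‖ * (∑' j, d j) ^ k) :
    HasSum (fun n => ∑' k, ‖a k‖ * coeff n (mk d ^ k)) (∑' k, ‖a k‖ * (∑' j, d j) ^ k) := by
  have hH := summable_norm_mul_coeff_mk_pow hd hds ha
  have hrows k := (hasSum_coeff_mk_pow hd hds k).mul_left ‖a k‖
  rw [(hH.hasSum.prod_fiberwise hrows).tsum_eq, ← (Equiv.prodComm ℕ ℕ).tsum_eq]
  exact hH.prod_symm.hasSum.prod_fiberwise fun n => (hH.prod_symm.prod_factor n).hasSum

theorem summable_norm_compCoeff (hd : ∀ j, 0 ≤ d j) (hds : Summable d)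
    (ha : Summable fun k => ‖a k‖ * (∑' j, d j) ^ k) : Summable fun n => ‖compCoeff a d n‖ :=
  (hasSum_tsum_norm_mul_coeff_mk_pow hd hds ha).summable.of_nonneg_of_le (fun _ => norm_nonneg _)
    (norm_compCoeff_le hd hds ha)

theorem tsum_norm_compCoeff_le (hd : ∀ j, 0 ≤ d j) (hds : Summable d)
    (ha : Summable fun k => ‖a k‖ * (∑' j, d j) ^ k) :
    ∑' n, ‖compCoeff a d n‖ ≤ ∑' k, ‖a k‖ * (∑' j, d j) ^ k :=
  (hasSum_tsum_norm_mul_coeff_mk_pow hd hds ha).tsum_eq ▸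
    (summable_norm_compCoeff hd hds ha).tsum_le_tsum (norm_compCoeff_le hd hds ha)
      (hasSum_tsum_norm_mul_coeff_mk_pow hd hds ha).summable

end Composition

section ArcsinSeries

theorem Ring.multichoose_pos {R : Type*} [CommRing R] [LinearOrder R] [IsStrictOrderedRing R]
    [BinomialRing R] {r : R} (hr : 0 < r) (m : ℕ) : 0 < Ring.multichoose r m := by
  have h := Ring.factorial_nsmul_multichoose_eq_ascPochhammer r m
  rw [Polynomial.ascPochhammer_smeval_eq_eval, nsmul_eq_mul] at h
  exact pos_of_mul_pos_right (h ▸ ascPochhammer_pos m r hr) (Nat.cast_nonneg _)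

theorem hasSum_multichoose_half_mul_pow {x : ℝ} (hx : |x| < 1) :
    HasSum (fun m => Ring.multichoose (1 / 2 : ℝ) m * x ^ m) (1 / √(1 - x)) := by
  have h := (one_div_one_sub_rpow_hasFPowerSeriesOnBall_zero (1 / 2)).hasSum
    (y := x) (by simpa [enorm_eq_nnnorm, ← NNReal.coe_lt_one] using hx)
  simpa only [FormalMultilinearSeries.ofScalars_apply_eq, smul_eq_mul, ← Ring.multichoose_eq,
    zero_add, ← sqrt_eq_rpow] using h

/-- `arcsin' y = ∑ₘ multichoose (1/2) m · y²ᵐ`, so the coefficient of `y²ᵐ⁺¹` in `arcsin` is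
`multichoose (1/2) m / (2m + 1)`. -/
noncomputable def arcsinCoeff (n : ℕ) : ℝ :=
  if Even n then 0 else Ring.multichoose (1 / 2 : ℝ) (n / 2) / n

theorem arcsinCoeff_nonneg (n : ℕ) : 0 ≤ arcsinCoeff n := by
  unfold arcsinCoeff
  split_ifs
  · exact le_rfl
  · exact div_nonneg (Ring.multichoose_pos one_half_pos _).le n.cast_nonneg

theorem arcsinCoeff_zero : arcsinCoeff 0 = 0 := if_pos ⟨0, rfl⟩

theorem arcsinCoeff_two_mul_add_one_mul (m : ℕ) :
    arcsinCoeff (2 * m + 1) * (2 * m + 1 : ℕ) = Ring.multichoose (1 / 2 : ℝ) m := by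
  rw [arcsinCoeff, if_neg (Nat.not_even_two_mul_add_one m), show (2 * m + 1) / 2 = m by omega,
    div_mul_cancel₀ _ (by positivity)]

theorem hasSum_arcsinCoeff_mul_deriv {x : ℝ} (hx : |x| < 1) :
    HasSum (fun n => arcsinCoeff n * (n * x ^ (n - 1))) (1 / √(1 - x ^ 2)) := by
  have hinj : Function.Injective fun m : ℕ => 2 * m + 1 := fun m m' h => by simpa using h
  have hodd : ∀ n ∉ Set.range fun m : ℕ => 2 * m + 1, arcsinCoeff n * (n * x ^ (n - 1)) = 0 := by
    intro n hn
    have heven : Even n := Nat.not_odd_iff_even.1 fun ⟨m, hm⟩ => hn ⟨m, hm.symm⟩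
    rw [arcsinCoeff, if_pos heven, zero_mul]
  rw [← hinj.hasSum_iff hodd]
  convert hasSum_multichoose_half_mul_pow (x := x ^ 2) (by rw [abs_pow]; nlinarith [abs_nonneg x])
    using 1
  funext m
  rw [Function.comp_apply, ← arcsinCoeff_two_mul_add_one_mul, Nat.add_sub_cancel, pow_mul]
  ring

theorem norm_arcsinCoeff_mul_deriv_le (n : ℕ) {r y : ℝ} (hy : |y| ≤ r) :
    ‖arcsinCoeff n * (n * y ^ (n - 1))‖ ≤ arcsinCoeff n * (n * r ^ (n - 1)) := by
  rw [norm_mul, norm_mul, norm_pow, Real.norm_of_nonneg (arcsinCoeff_nonneg n), RCLike.norm_natCast,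
    Real.norm_eq_abs]
  gcongr ?_ * (_ * ?_ ^ _)
  exact arcsinCoeff_nonneg n

theorem arcsinCoeff_mul_zero_pow (n : ℕ) : arcsinCoeff n * (0 : ℝ) ^ n = 0 := by
  rcases n with _ | n
  · rw [arcsinCoeff_zero, zero_mul]
  · rw [zero_pow n.succ_ne_zero, mul_zero]

theorem summable_arcsinCoeff_mul_pow {x : ℝ} (hx : |x| < 1) :
    Summable fun n => arcsinCoeff n * x ^ n := by
  obtain ⟨r, hxr, hr⟩ := exists_between hx
  have hr0 : 0 < r := (abs_nonneg x).trans_lt hxr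
  exact summable_of_summable_hasDerivAt_of_isPreconnected (g := fun n y => arcsinCoeff n * y ^ n)
    (g' := fun n y => arcsinCoeff n * (n * y ^ (n - 1))) (t := Set.Ioo (-r) r) (y₀ := 0)
    (hasSum_arcsinCoeff_mul_deriv ((abs_of_pos hr0).trans_lt hr)).summable
    isOpen_Ioo isPreconnected_Ioo (fun n y _ => (hasDerivAt_pow n y).const_mul _)
    (fun n y hy => norm_arcsinCoeff_mul_deriv_le n (abs_lt.2 hy).le)
    ⟨neg_lt_zero.2 hr0, hr0⟩ (summable_zero.congr fun n => (arcsinCoeff_mul_zero_pow n).symm)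
    (abs_lt.1 hxr)

theorem hasDerivAt_tsum_arcsinCoeff_mul_pow {x : ℝ} (hx : |x| < 1) :
    HasDerivAt (fun y => ∑' n, arcsinCoeff n * y ^ n) (1 / √(1 - x ^ 2)) x := by
  obtain ⟨r, hxr, hr⟩ := exists_between hx
  have hr0 : 0 < r := (abs_nonneg x).trans_lt hxr
  rw [← (hasSum_arcsinCoeff_mul_deriv hx).tsum_eq]
  exact hasDerivAt_tsum_of_isPreconnected (g := fun n y => arcsinCoeff n * y ^ n)
    (g' := fun n y => arcsinCoeff n * (n * y ^ (n - 1))) (t := Set.Ioo (-r) r) (y₀ := 0)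
    (hasSum_arcsinCoeff_mul_deriv ((abs_of_pos hr0).trans_lt hr)).summable
    isOpen_Ioo isPreconnected_Ioo (fun n y _ => (hasDerivAt_pow n y).const_mul _)
    (fun n y hy => norm_arcsinCoeff_mul_deriv_le n (abs_lt.2 hy).le)
    ⟨neg_lt_zero.2 hr0, hr0⟩ (summable_zero.congr fun n => (arcsinCoeff_mul_zero_pow n).symm)
    (abs_lt.1 hxr)

theorem hasSum_arcsin {x : ℝ} (hx : x ∈ Set.Ioo (-1 : ℝ) 1) :
    HasSum (fun n => arcsinCoeff n * x ^ n) (arcsin x) := by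
  have habs {y : ℝ} (hy : y ∈ Set.Ioo (-1 : ℝ) 1) : |y| < 1 := abs_lt.2 hy
  have hS {y} (hy : y ∈ Set.Ioo (-1 : ℝ) 1) := hasDerivAt_tsum_arcsinCoeff_mul_pow (habs hy)
  have harcsin {y} (hy : y ∈ Set.Ioo (-1 : ℝ) 1) := hasDerivAt_arcsin hy.1.ne' hy.2.ne
  have heq := isOpen_Ioo.eqOn_of_deriv_eq isPreconnected_Ioo
    (fun y hy => (hS hy).differentiableAt.differentiableWithinAt)
    (fun y hy => (harcsin hy).differentiableAt.differentiableWithinAt)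
    (fun y hy => (hS hy).deriv.trans (harcsin hy).deriv.symm) (x := 0) (by norm_num)
    (by simp only [arcsinCoeff_mul_zero_pow, tsum_zero, arcsin_zero]) hx
  exact heq ▸ (summable_arcsinCoeff_mul_pow (habs hx)).hasSum

open Filter Topology in
theorem sum_range_arcsinCoeff_le (N : ℕ) : ∑ n ∈ range N, arcsinCoeff n ≤ π / 2 := by
  have hlim : Tendsto (fun z => ∑ n ∈ range N, arcsinCoeff n * z ^ n) (𝓝[<] 1)
      (𝓝 (∑ n ∈ range N, arcsinCoeff n)) := by
    have hcont : Continuous fun z : ℝ => ∑ n ∈ range N, arcsinCoeff n * z ^ n := by fun_prop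
    simpa using (hcont.tendsto 1).mono_left nhdsWithin_le_nhds
  refine le_of_tendsto hlim ?_
  filter_upwards [Ioo_mem_nhdsLT one_pos] with z hz
  have hz' : z ∈ Set.Ioo (-1 : ℝ) 1 := ⟨by linarith [hz.1], hz.2⟩
  calc ∑ n ∈ range N, arcsinCoeff n * z ^ n
      ≤ ∑' n, arcsinCoeff n * z ^ n :=
        Summable.sum_le_tsum _ (fun n _ => mul_nonneg (arcsinCoeff_nonneg n) (pow_nonneg hz.1.le n))
          (hasSum_arcsin hz').summable
    _ = arcsin z := (hasSum_arcsin hz').tsum_eq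
    _ ≤ π / 2 := arcsin_le_pi_div_two z

theorem summable_arcsinCoeff : Summable arcsinCoeff :=
  summable_of_sum_range_le arcsinCoeff_nonneg sum_range_arcsinCoeff_le

theorem tsum_arcsinCoeff_le : ∑' n, arcsinCoeff n ≤ π / 2 :=
  Real.tsum_le_of_sum_range_le arcsinCoeff_nonneg sum_range_arcsinCoeff_le

end ArcsinSeries

theorem norm_tsum_sub_sum_range_le {𝕜 : Type*} [NormedDivisionRing 𝕜] [CompleteSpace 𝕜]
    {c : ℕ → 𝕜} (hc : Summable fun n => ‖c n‖) {z : 𝕜} {r : ℝ} (hz : ‖z‖ ≤ r) (hr : r ≤ 1)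
    (T : ℕ) : ‖∑' n, c n * z ^ n - ∑ n ∈ range T, c n * z ^ n‖ ≤ (∑' n, ‖c n‖) * r ^ T := by
  have hr0 : 0 ≤ r := (norm_nonneg z).trans hz
  have hpow n : ‖z ^ n‖ ≤ r ^ n := norm_pow z n ▸ pow_le_pow_left₀ (norm_nonneg z) hz n
  have hsum : Summable fun n => c n * z ^ n := .of_norm_bounded hc fun n => by
    rw [norm_mul]
    exact mul_le_of_le_one_right (norm_nonneg _) ((hpow n).trans (pow_le_one₀ hr0 hr))
  have htail : Summable fun n => ‖c (n + T)‖ := (summable_nat_add_iff T).2 hc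
  rw [← hsum.sum_add_tsum_nat_add T, add_sub_cancel_left]
  calc ‖∑' n, c (n + T) * z ^ (n + T)‖
      ≤ ∑' n, ‖c (n + T)‖ * r ^ T := by
        refine tsum_of_norm_bounded (htail.mul_right _).hasSum fun n => ?_
        rw [norm_mul]
        gcongr
        exact (hpow _).trans (pow_le_pow_of_le_one hr0 hr (Nat.le_add_left T n))
    _ = (∑' n, ‖c (n + T)‖) * r ^ T := tsum_mul_right
    _ ≤ (∑' n, ‖c n‖) * r ^ T := by
        refine mul_le_mul_of_nonneg_right ?_ (pow_nonneg hr0 T)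
        rw [← hc.sum_add_tsum_nat_add T]
        exact le_add_of_nonneg_left (sum_nonneg fun n _ => norm_nonneg _)

theorem mul_one_sub_pow_le_of_log_div_le {B δ ν : ℝ} (hδ : 0 < δ) (hν : ν ∈ Set.Ioc 0 1) {T : ℕ}
    (hT : log (B / δ) / ν ≤ T) : B * (1 - ν) ^ T ≤ δ := by
  rcases le_or_gt B 0 with hB | hB
  · exact (mul_nonpos_of_nonpos_of_nonneg hB (pow_nonneg (by linarith [hν.2]) T)).trans hδ.le
  have hlog : log (B / δ) ≤ ν * T := by rwa [div_le_iff₀' hν.1] at hT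
  calc B * (1 - ν) ^ T
      ≤ B * exp (-ν) ^ T := by
        gcongr
        · linarith [hν.2]
        · exact one_sub_le_exp_neg ν
    _ = B * exp (-log (B / δ)) * exp (log (B / δ) - ν * T) := by
        rw [← exp_nat_mul, mul_assoc, ← exp_add]; ring_nf
    _ ≤ B * exp (-log (B / δ)) * 1 := by gcongr; exact exp_le_one_iff.2 (by linarith)
    _ = δ := by rw [mul_one, exp_neg, exp_log (div_pos hB hδ), inv_div, mul_div_cancel₀ _ hB.ne']

theorem two_mul_div_pi_mul_arcsin_mem_Ioo {b y : ℝ} (hb : 0 < b) (hy : y ∈ Set.Ioo (-1 : ℝ) 1) :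
    2 * b / π * arcsin y ∈ Set.Ioo (-b) b := by
  have hπ : 2 * b / π * (π / 2) = b := by field_simp
  have hpos : 0 < 2 * b / π := by positivity
  constructor
  · nlinarith [neg_pi_div_two_lt_arcsin.2 hy.1]
  · nlinarith [arcsin_lt_pi_div_two.2 hy.2]

theorem taylor_arcsin_truncation_general
    (f : ℝ → ℂ) (x₀ b B : ℝ) (hb : 0 < b) (a : ℕ → ℂ)
    (hconv : ∀ x ∈ Set.Ioo (-b) b, HasSum (fun k : ℕ => a k * (x : ℂ) ^ k) (f (x₀ + x)))
    (hsum : Summable (fun k : ℕ => ‖a k‖ * b ^ k))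
    (hbound : ∑' k : ℕ, ‖a k‖ * b ^ k ≤ B) :
    ∃ c : ℕ → ℂ,
      (∀ y ∈ Set.Ioo (-1 : ℝ) 1,
        HasSum (fun k : ℕ => c k * (y : ℂ) ^ k)
          (f (x₀ + (2 * b / π) * Real.arcsin y))) ∧
      Summable (fun k : ℕ => ‖c k‖) ∧
      (∑' k : ℕ, ‖c k‖) ≤ B ∧
      ∀ δ : ℝ, 0 < δ → ∀ ν ∈ Set.Ioc (0 : ℝ) 1, ∀ T : ℕ,
        (T : ℝ) ≥ Real.log (B / δ) / ν →
        ∀ y ∈ Set.Icc (-1 + ν) (1 - ν),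
          ‖f (x₀ + (2 * b / π) * Real.arcsin y)
            - ∑ k ∈ Finset.range T, c k * (y : ℂ) ^ k‖ ≤ δ := by
  set d : ℕ → ℝ := fun j => 2 * b / π * arcsinCoeff j
  have hd j : 0 ≤ d j := mul_nonneg (by positivity) (arcsinCoeff_nonneg j)
  have hds : Summable d := summable_arcsinCoeff.mul_left _
  have hdb : ∑' j, d j ≤ b := by
    rw [tsum_mul_left]
    exact (mul_le_mul_of_nonneg_left tsum_arcsinCoeff_le (by positivity)).trans_eq (by field_simp)
  have hdy {y} (hy : y ∈ Set.Ioo (-1 : ℝ) 1) : ∑' j, d j * y ^ j = 2 * b / π * arcsin y := by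
    simp only [d, mul_assoc, tsum_mul_left, (hasSum_arcsin hy).tsum_eq]
  have hak k : ‖a k‖ * (∑' j, d j) ^ k ≤ ‖a k‖ * b ^ k :=
    mul_le_mul_of_nonneg_left (pow_le_pow_left₀ (tsum_nonneg hd) hdb k) (norm_nonneg _)
  have ha : Summable fun k => ‖a k‖ * (∑' j, d j) ^ k :=
    hsum.of_nonneg_of_le (fun k => mul_nonneg (norm_nonneg _) (pow_nonneg (tsum_nonneg hd) k)) hak
  have hg {y} (hy : y ∈ Set.Ioo (-1 : ℝ) 1) :
      HasSum (fun n => compCoeff a d n * (y : ℂ) ^ n) (f (x₀ + 2 * b / π * arcsin y)) := by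
    have h := hasSum_compCoeff_mul_pow hd hds ha (abs_lt.2 hy).le
    rwa [hdy hy, (hconv _ (two_mul_div_pi_mul_arcsin_mem_Ioo hb hy)).tsum_eq] at h
  have hcB : ∑' n, ‖compCoeff a d n‖ ≤ B :=
    ((tsum_norm_compCoeff_le hd hds ha).trans (ha.tsum_le_tsum hak hsum)).trans hbound
  refine ⟨compCoeff a d, fun y hy => hg hy, summable_norm_compCoeff hd hds ha, hcB,
    fun δ hδ ν hν T hT y hy => ?_⟩
  have hyν : ‖(y : ℂ)‖ ≤ 1 - ν := by
    rw [Complex.norm_real, Real.norm_eq_abs]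
    exact abs_le.2 ⟨by linarith [hy.1], hy.2⟩
  rw [← (hg ⟨by linarith [hy.1, hν.1], by linarith [hy.2, hν.1]⟩).tsum_eq]
  calc _ ≤ (∑' n, ‖compCoeff a d n‖) * (1 - ν) ^ T :=
        norm_tsum_sub_sum_range_le (summable_norm_compCoeff hd hds ha) hyν (by linarith [hν.1]) T
    _ ≤ B * (1 - ν) ^ T := mul_le_mul_of_nonneg_right hcB (pow_nonneg (by linarith [hν.2]) T)
    _ ≤ δ := mul_one_sub_pow_le_of_log_div_le hδ hν hT

/-- **Taylor series truncation bound after composing with arcsin.**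
If `f(x₀ + x) = ∑ₖ aₖ xᵏ` on `(-b, b)` with `∑ₖ |aₖ| bᵏ ≤ B`, then
`g(y) := f(x₀ + (2b/π) arcsin y)` has a power series `∑ₖ cₖ yᵏ` with `∑ₖ |cₖ| ≤ B`,
and truncating at degree `T - 1` with `T ≥ ln(B/δ)/ν` gives error at most `δ`
on `[-1+ν, 1-ν]`. -/
theorem taylor_arcsin_truncation
    (f : ℝ → ℂ) (x₀ b B : ℝ) (hb : 0 < b) (hB : 0 < B) (a : ℕ → ℂ)
    (hconv : ∀ x ∈ Set.Ioo (-b) b, HasSum (fun k : ℕ => a k * (x : ℂ) ^ k) (f (x₀ + x)))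
    (hsum : Summable (fun k : ℕ => ‖a k‖ * b ^ k))
    (hbound : ∑' k : ℕ, ‖a k‖ * b ^ k ≤ B) :
    ∃ c : ℕ → ℂ,
      (∀ y ∈ Set.Ioo (-1 : ℝ) 1,
        HasSum (fun k : ℕ => c k * (y : ℂ) ^ k)
          (f (x₀ + (2 * b / π) * Real.arcsin y))) ∧
      Summable (fun k : ℕ => ‖c k‖) ∧
      (∑' k : ℕ, ‖c k‖) ≤ B ∧
      ∀ δ : ℝ, 0 < δ → ∀ ν ∈ Set.Ioc (0 : ℝ) 1, ∀ T : ℕ,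
        (T : ℝ) ≥ Real.log (B / δ) / ν →
        ∀ y ∈ Set.Icc (-1 + ν) (1 - ν),
          ‖f (x₀ + (2 * b / π) * Real.arcsin y)
            - ∑ k ∈ Finset.range T, c k * (y : ℂ) ^ k‖ ≤ δ :=
  taylor_arcsin_truncation_general f x₀ b B hb a hconv hsum hbound
end

section
/- Let m ≥ 1, let U be an m × m complex unitary matrix, let P be an m × m complex matrix with P² = P and Pᴴ = P (an orthogonal projection), let v₀ and ψ be unit vectors in ℂ^m, and let a ≥ 0 be a real number with P·(U·v₀) = a·ψ. Define W := U·(2·v₀v₀ᴴ − I)·Uᴴ·(2P − I). Then for every natural number k: (i) P·(W^k·(U·v₀)) = T_{2k+1}(a)·ψ, and (ii) ⟨U·v₀, (2P − I)·(W^k·(U·v₀))⟩ = T_{2k+2}(a), where T_n denotes the degree-n Chebyshev polynomial of the first kind evaluated at the real number a. -/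
open Matrix Polynomial

/-! Since `U` is unitary, `W = (2uuᴴ - 1)(2P - 1)` for the unit vector `u = U v₀`. For every `x`,
`P (W x) = 2a ⟨u, (2P - 1) x⟩ ψ - P x` and `⟨u, W x⟩ = ⟨u, (2P - 1) x⟩ = 2a ⟨ψ, P x⟩ - ⟨u, x⟩`.
So writing `P (Wᵏ u) = sₖ ψ` and `tₖ = ⟨u, Wᵏ u⟩`, the interleaved sequence `t₀, s₀, t₁, s₁, …`
obeys the Chebyshev recurrence `T_{n+2}(a) = 2a T_{n+1}(a) - T_n(a)` and starts with
`t₀ = 1 = T₀(a)`, `s₀ = a = T₁(a)`. -/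

namespace Polynomial.Chebyshev

theorem T_eval_add_two {R : Type*} [CommRing R] (c : R) (n : ℤ) :
    (T R (n + 2)).eval c = 2 * c * (T R (n + 1)).eval c - (T R n).eval c := by
  simp [T_add_two]

end Polynomial.Chebyshev

namespace Matrix

variable {n R : Type*} [Fintype n] [CommRing R]

theorem mulVec_two_smul_sub_one_mulVec [DecidableEq n] {P : Matrix n n R}
    (hP : IsIdempotentElem P) (x : n → R) : P *ᵥ (((2 : R) • P - 1) *ᵥ x) = P *ᵥ x := by
  rw [mulVec_mulVec, mul_sub, Matrix.mul_smul, hP.eq, mul_one, two_smul, add_sub_cancel_right]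

variable [StarRing R]

theorem reflection_vecMulVec_mulVec [DecidableEq n] (u y : n → R) :
    ((2 : R) • vecMulVec u (star u) - 1) *ᵥ y = (2 * (star u ⬝ᵥ y)) • u - y := by
  rw [sub_mulVec, smul_mulVec, vecMulVec_mulVec, one_mulVec, op_smul_eq_smul, smul_smul]

theorem mul_reflection_vecMulVec_mul_conjTranspose [DecidableEq n] {U : Matrix n n R}
    (hU : U * Uᴴ = 1) (v : n → R) :
    U * ((2 : R) • vecMulVec v (star v) - 1) * Uᴴ
      = (2 : R) • vecMulVec (U *ᵥ v) (star (U *ᵥ v)) - 1 := by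
  rw [mul_sub, sub_mul, mul_one, hU, Matrix.mul_smul, Matrix.smul_mul, mul_vecMulVec,
    vecMulVec_mul, star_mulVec]

theorem dotProduct_reflection_vecMulVec_mulVec [DecidableEq n] {u : n → R}
    (hu : star u ⬝ᵥ u = 1) (y : n → R) :
    star u ⬝ᵥ (((2 : R) • vecMulVec u (star u) - 1) *ᵥ y) = star u ⬝ᵥ y := by
  rw [reflection_vecMulVec_mulVec, dotProduct_sub, dotProduct_smul, hu, smul_eq_mul]
  ring

theorem _root_.IsStarProjection.star_mulVec_dotProduct_mulVec {P : Matrix n n R}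
    (hP : IsStarProjection P) (u x : n → R) : star (P *ᵥ u) ⬝ᵥ (P *ᵥ x) = star u ⬝ᵥ (P *ᵥ x) := by
  rw [star_mulVec, ← dotProduct_mulVec, mulVec_mulVec, ← star_eq_conjTranspose,
    hP.isSelfAdjoint.star_eq, hP.isIdempotentElem.eq]

theorem _root_.IsStarProjection.dotProduct_two_smul_sub_one_mulVec [DecidableEq n]
    {P : Matrix n n R} (hP : IsStarProjection P) (u x : n → R) :
    star u ⬝ᵥ (((2 : R) • P - 1) *ᵥ x) = 2 * (star (P *ᵥ u) ⬝ᵥ (P *ᵥ x)) - star u ⬝ᵥ x := by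
  rw [hP.star_mulVec_dotProduct_mulVec, sub_mulVec, smul_mulVec, one_mulVec, dotProduct_sub,
    dotProduct_smul, smul_eq_mul]

variable [DecidableEq n]

def groverIterate (u : n → R) (P : Matrix n n R) : Matrix n n R :=
  ((2 : R) • vecMulVec u (star u) - 1) * ((2 : R) • P - 1)

section groverIterate

variable {P : Matrix n n R} {u ψ : n → R} {c : R}

theorem mulVec_groverIterate_mulVec (hP : IsIdempotentElem P) (hPu : P *ᵥ u = c • ψ)
    (x : n → R) :
    P *ᵥ (groverIterate u P *ᵥ x)
      = (2 * c * (star u ⬝ᵥ (((2 : R) • P - 1) *ᵥ x))) • ψ - P *ᵥ x := by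
  rw [groverIterate, ← mulVec_mulVec, reflection_vecMulVec_mulVec, mulVec_sub, mulVec_smul,
    hPu, mulVec_two_smul_sub_one_mulVec hP, smul_smul, mul_right_comm]

theorem dotProduct_groverIterate_mulVec (hu : star u ⬝ᵥ u = 1) (x : n → R) :
    star u ⬝ᵥ (groverIterate u P *ᵥ x) = star u ⬝ᵥ (((2 : R) • P - 1) *ᵥ x) := by
  rw [groverIterate, ← mulVec_mulVec, dotProduct_reflection_vecMulVec_mulVec hu]

theorem dotProduct_two_smul_sub_one_mulVec_of_mulVec_eq (hP : IsStarProjection P)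
    (hψ : star ψ ⬝ᵥ ψ = 1) (hc : IsSelfAdjoint c) (hPu : P *ᵥ u = c • ψ) {x : n → R} {s : R}
    (hx : P *ᵥ x = s • ψ) :
    star u ⬝ᵥ (((2 : R) • P - 1) *ᵥ x) = 2 * c * s - star u ⬝ᵥ x := by
  rw [hP.dotProduct_two_smul_sub_one_mulVec, hPu, hx, star_smul, hc.star_eq, smul_dotProduct,
    dotProduct_smul, hψ, smul_eq_mul, smul_eq_mul, mul_one, mul_assoc]

open Polynomial.Chebyshev

theorem groverIterate_pow_mulVec_eq_chebyshev (hP : IsStarProjection P) (hu : star u ⬝ᵥ u = 1)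
    (hψ : star ψ ⬝ᵥ ψ = 1) (hc : IsSelfAdjoint c) (hPu : P *ᵥ u = c • ψ) (k : ℕ) :
    P *ᵥ (groverIterate u P ^ k *ᵥ u) = (T R (2 * k + 1)).eval c • ψ ∧
      star u ⬝ᵥ (groverIterate u P ^ k *ᵥ u) = (T R (2 * k)).eval c := by
  induction k with
  | zero => simp [hPu, hu]
  | succ k ih =>
    have hR : star u ⬝ᵥ (((2 : R) • P - 1) *ᵥ (groverIterate u P ^ k *ᵥ u))
        = (T R (2 * k + 2)).eval c := by
      rw [dotProduct_two_smul_sub_one_mulVec_of_mulVec_eq hP hψ hc hPu ih.1, ih.2,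
        T_eval_add_two]
    rw [Nat.cast_succ, show 2 * ((k : ℤ) + 1) = 2 * k + 2 by ring, pow_succ', ← mulVec_mulVec,
      mulVec_groverIterate_mulVec hP.isIdempotentElem hPu, dotProduct_groverIterate_mulVec hu,
      hR, ih.1, ← sub_smul, show 2 * (k : ℤ) + 2 + 1 = 2 * k + 1 + 2 by ring,
      T_eval_add_two c (2 * k + 1), show 2 * (k : ℤ) + 1 + 1 = 2 * k + 2 by ring]
    exact ⟨rfl, rfl⟩

theorem amplitude_amplification (hP : IsStarProjection P) (hu : star u ⬝ᵥ u = 1)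
    (hψ : star ψ ⬝ᵥ ψ = 1) (hc : IsSelfAdjoint c) (hPu : P *ᵥ u = c • ψ) (k : ℕ) :
    P *ᵥ (groverIterate u P ^ k *ᵥ u) = (T R (2 * k + 1)).eval c • ψ ∧
      star u ⬝ᵥ (((2 : R) • P - 1) *ᵥ (groverIterate u P ^ k *ᵥ u))
        = (T R (2 * k + 2)).eval c := by
  obtain ⟨hPk, huk⟩ := groverIterate_pow_mulVec_eq_chebyshev hP hu hψ hc hPu k
  refine ⟨hPk, ?_⟩
  rw [dotProduct_two_smul_sub_one_mulVec_of_mulVec_eq hP hψ hc hPu hPk, huk, T_eval_add_two]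

end groverIterate

end Matrix

theorem amplitude_amplification_chebyshev_general
    (m : ℕ)
    (U P : Matrix (Fin m) (Fin m) ℂ)
    (hU : U * Uᴴ = 1) (hU' : Uᴴ * U = 1)
    (hP : P * P = P) (hP' : Pᴴ = P)
    (v₀ ψ : Fin m → ℂ)
    (hv₀ : star v₀ ⬝ᵥ v₀ = 1) (hψ : star ψ ⬝ᵥ ψ = 1)
    (a : ℝ)
    (hstate : P.mulVec (U.mulVec v₀) = (a : ℂ) • ψ)
    (W : Matrix (Fin m) (Fin m) ℂ)
    (hW : W = U * ((2 : ℂ) • Matrix.vecMulVec v₀ (star v₀) - 1) * Uᴴ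
            * ((2 : ℂ) • P - 1))
    (k : ℕ) :
    P.mulVec ((W ^ k).mulVec (U.mulVec v₀))
        = (((Polynomial.Chebyshev.T ℝ (2 * (k : ℤ) + 1)).eval a : ℝ) : ℂ) • ψ ∧
    star (U.mulVec v₀) ⬝ᵥ
        (((2 : ℂ) • P - 1).mulVec ((W ^ k).mulVec (U.mulVec v₀)))
        = (((Polynomial.Chebyshev.T ℝ (2 * (k : ℤ) + 2)).eval a : ℝ) : ℂ) := by
  have hu : star (U *ᵥ v₀) ⬝ᵥ (U *ᵥ v₀) = 1 := by
    rw [star_mulVec, ← dotProduct_mulVec, mulVec_mulVec, hU', one_mulVec, hv₀]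
  rw [mul_reflection_vecMulVec_mul_conjTranspose hU, ← groverIterate] at hW
  subst hW
  have h := amplitude_amplification ⟨hP, hP'⟩ hu hψ (Complex.conj_ofReal a) hstate k
  simpa only [← Complex.coe_algebraMap, Polynomial.Chebyshev.algebraMap_eval_T] using h

/-- **Amplitude amplification (Chebyshev form).**
If `P (U v₀) = a ψ` with `U` unitary, `P` an orthogonal projection, and
`W := U (2 v₀v₀ᴴ - I) Uᴴ (2P - I)`, then `P Wᵏ U v₀ = T_{2k+1}(a) ψ` and
`⟨U v₀, (2P - I) Wᵏ U v₀⟩ = T_{2k+2}(a)`. -/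
theorem amplitude_amplification_chebyshev
    (m : ℕ) (hm : 1 ≤ m)
    (U P : Matrix (Fin m) (Fin m) ℂ)
    (hU : U * Uᴴ = 1) (hU' : Uᴴ * U = 1)
    (hP : P * P = P) (hP' : Pᴴ = P)
    (v₀ ψ : Fin m → ℂ)
    (hv₀ : star v₀ ⬝ᵥ v₀ = 1) (hψ : star ψ ⬝ᵥ ψ = 1)
    (a : ℝ) (ha : 0 ≤ a)
    (hstate : P.mulVec (U.mulVec v₀) = (a : ℂ) • ψ)
    (W : Matrix (Fin m) (Fin m) ℂ)
    (hW : W = U * ((2 : ℂ) • Matrix.vecMulVec v₀ (star v₀) - 1) * Uᴴ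
            * ((2 : ℂ) • P - 1))
    (k : ℕ) :
    P.mulVec ((W ^ k).mulVec (U.mulVec v₀))
        = (((Polynomial.Chebyshev.T ℝ (2 * (k : ℤ) + 1)).eval a : ℝ) : ℂ) • ψ ∧
    star (U.mulVec v₀) ⬝ᵥ
        (((2 : ℂ) • P - 1).mulVec ((W ^ k).mulVec (U.mulVec v₀)))
        = (((Polynomial.Chebyshev.T ℝ (2 * (k : ℤ) + 2)).eval a : ℝ) : ℂ) :=
  amplitude_amplification_chebyshev_general m U P hU hU' hP hP' v₀ ψ hv₀ hψ a hstate W hW k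
end

section
/- Let m ≥ 1, let U be an m × m complex unitary matrix, let P be an m × m complex matrix with P² = P and Pᴴ = P, let v₀ and ψ be unit vectors in ℂ^m, and let a ∈ (0, 1] be a real number with P·(U·v₀) = a·ψ. Set k := ⌈π/(4·arcsin(a)) − 1/2⌉ and θ := π/(4k+2). Let R be a 2 × 2 complex unitary matrix whose (0,0) entry equals sin(θ)/a, let e₀ := (1, 0) ∈ ℂ², define U' := R ⊗ U (Kronecker product), and define W' := U'·(2·(e₀⊗v₀)(e₀⊗v₀)ᴴ − I)·U'ᴴ·(I − 2·(e₀e₀ᴴ ⊗ P)). Then (W')^k · (U' · (e₀ ⊗ v₀)) = e₀ ⊗ ψ. -/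
/-!
Conjugating the reflection about `e₀ ⊗ v₀` by the unitary `U' = R ⊗ U` gives the reflection about
`s = U' (e₀ ⊗ v₀)`, so `W'` is the Grover iterate of `s` with respect to the orthogonal projection
`Q = e₀e₀ᴴ ⊗ P`. The normalisation `R₀₀ = sin θ / a` makes `Q s = sin θ • g` for the good state
`g = e₀ ⊗ ψ`. Hence each iteration rotates by `2θ` in the plane spanned by `g` and `s`, and after
`k` iterations the angle is `(2k + 1) θ = π / 2`, i.e. the state is exactly `g`.
-/

open Matrix Kronecker Real

section Kronecker

variable {R l l' n n' : Type*} [CommSemiring R] [Fintype l'] [Fintype n']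

theorem kronecker_mulVec_mul (A : Matrix l l' R) (B : Matrix n n' R) (x : l' → R) (y : n' → R) :
    (A ⊗ₖ B) *ᵥ (fun p => x p.1 * y p.2) = fun p => (A *ᵥ x) p.1 * (B *ᵥ y) p.2 := by
  funext p
  simp only [mulVec, dotProduct, kroneckerMap_apply, Fintype.sum_prod_type, Finset.sum_mul_sum]
  exact Finset.sum_congr rfl fun i _ => Finset.sum_congr rfl fun j _ => by ring

theorem star_mul_dotProduct_mul [StarRing R] (x x' : l' → R) (y y' : n' → R) :
    star (fun p => x p.1 * y p.2 : l' × n' → R) ⬝ᵥ (fun p => x' p.1 * y' p.2) =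
      (star x ⬝ᵥ x') * (star y ⬝ᵥ y') := by
  simp only [dotProduct, Pi.star_apply, star_mul', Fintype.sum_prod_type, Finset.sum_mul_sum]
  exact Finset.sum_congr rfl fun i _ => Finset.sum_congr rfl fun j _ => by ring

end Kronecker

section Reflection

variable {R n : Type*} [CommRing R] [StarRing R] [Fintype n] [DecidableEq n]

theorem star_mulVec_dotProduct_mulVec {M : Matrix n n R} (hM : Mᴴ * M = 1) (v : n → R) :
    star (M *ᵥ v) ⬝ᵥ (M *ᵥ v) = star v ⬝ᵥ v := by
  rw [star_mulVec, dotProduct_mulVec, vecMul_vecMul, hM, vecMul_one]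

theorem reflection_mulVec (s z : n → R) :
    ((2 : R) • vecMulVec s (star s) - 1) *ᵥ z = (2 * (star s ⬝ᵥ z)) • s - z := by
  rw [sub_mulVec, smul_mulVec, vecMulVec_mulVec, one_mulVec, op_smul_eq_smul, smul_smul]

theorem mul_reflection_mul_conjTranspose {M : Matrix n n R} (hM : M * Mᴴ = 1) (w : n → R) :
    M * ((2 : R) • vecMulVec w (star w) - 1) * Mᴴ =
      (2 : R) • vecMulVec (M *ᵥ w) (star (M *ᵥ w)) - 1 := by
  rw [mul_sub, sub_mul, mul_smul_comm, smul_mul_assoc, mul_vecMulVec, vecMulVec_mul, star_mulVec,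
    mul_one, hM]

end Reflection

namespace AmplitudeAmplification

variable {𝕜 n : Type*} [RCLike 𝕜] [Fintype n]

def groverOperator [DecidableEq n] (s : n → 𝕜) (Q : Matrix n n 𝕜) : Matrix n n 𝕜 :=
  ((2 : 𝕜) • vecMulVec s (star s) - 1) * (1 - (2 : 𝕜) • Q)

variable {s g : n → 𝕜} {Q : Matrix n n 𝕜} {σ : ℝ}

theorem star_dotProduct_eq_of_mulVec_eq_smul (hg : star g ⬝ᵥ g = 1) (hQ : Qᴴ = Q)
    (hQg : Q *ᵥ g = g) (hQs : Q *ᵥ s = (σ : 𝕜) • g) : star s ⬝ᵥ g = σ := by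
  calc star s ⬝ᵥ g = star (Q *ᵥ s) ⬝ᵥ g := by
        rw [star_mulVec, hQ, ← dotProduct_mulVec, hQg]
    _ = σ := by rw [hQs, star_smul, smul_dotProduct, hg, RCLike.star_def, RCLike.conj_ofReal,
        smul_eq_mul, mul_one]

theorem groverOperator_mulVec [DecidableEq n] (hs : star s ⬝ᵥ s = 1) (hg : star g ⬝ᵥ g = 1)
    (hQ : Qᴴ = Q) (hQg : Q *ᵥ g = g) (hQs : Q *ᵥ s = (σ : 𝕜) • g) (x y : ℝ) :
    groverOperator s Q *ᵥ ((x : 𝕜) • g + (y : 𝕜) • (s - (σ : 𝕜) • g)) =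
      ((x * (1 - 2 * σ ^ 2) + 2 * y * σ * (1 - σ ^ 2) : ℝ) : 𝕜) • g +
        ((y * (1 - 2 * σ ^ 2) - 2 * x * σ : ℝ) : 𝕜) • (s - (σ : 𝕜) • g) := by
  have hsg := star_dotProduct_eq_of_mulVec_eq_smul hg hQ hQg hQs
  have hQ_reflect : (1 - (2 : 𝕜) • Q) *ᵥ ((x : 𝕜) • g + (y : 𝕜) • (s - (σ : 𝕜) • g)) =
      (-x : 𝕜) • g + (y : 𝕜) • (s - (σ : 𝕜) • g) := by
    simp only [sub_mulVec, one_mulVec, smul_mulVec, mulVec_add, mulVec_sub, mulVec_smul, hQg, hQs]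
    module
  rw [groverOperator, ← mulVec_mulVec, hQ_reflect, reflection_mulVec]
  simp only [dotProduct_sub, dotProduct_add, dotProduct_smul, hs, hsg, smul_eq_mul]
  push_cast
  module

theorem star_sub_dotProduct_sub (hs : star s ⬝ᵥ s = 1) (hg : star g ⬝ᵥ g = 1) (hQ : Qᴴ = Q)
    (hQg : Q *ᵥ g = g) (hQs : Q *ᵥ s = (σ : 𝕜) • g) :
    star (s - (σ : 𝕜) • g) ⬝ᵥ (s - (σ : 𝕜) • g) = ((1 - σ ^ 2 : ℝ) : 𝕜) := by
  have hsg := star_dotProduct_eq_of_mulVec_eq_smul hg hQ hQg hQs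
  have hgs : star g ⬝ᵥ s = σ := by rw [star_dotProduct, hsg, RCLike.star_def, RCLike.conj_ofReal]
  simp only [star_sub, star_smul, RCLike.star_def, RCLike.conj_ofReal, sub_dotProduct,
    dotProduct_sub, smul_dotProduct, dotProduct_smul, hs, hg, hsg, hgs, smul_eq_mul]
  push_cast
  ring

-- `y` stands for `cos ((2j + 1) θ) / cos θ`, not written as a quotient since `cos θ` may vanish.
theorem groverOperator_pow_mulVec [DecidableEq n] (hs : star s ⬝ᵥ s = 1) (hg : star g ⬝ᵥ g = 1)
    (hQ : Qᴴ = Q) (hQg : Q *ᵥ g = g) {θ : ℝ} (hQs : Q *ᵥ s = (sin θ : 𝕜) • g) (j : ℕ) :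
    ∃ y : ℝ, cos θ * y = cos ((2 * j + 1) * θ) ∧
      groverOperator s Q ^ j *ᵥ s =
        (sin ((2 * j + 1) * θ) : 𝕜) • g + (y : 𝕜) • (s - (sin θ : 𝕜) • g) := by
  induction j with
  | zero => exact ⟨1, by simp, by simp⟩
  | succ j ih =>
    obtain ⟨y, hy, hpow⟩ := ih
    have harg : (2 * ((j + 1 : ℕ) : ℝ) + 1) * θ = (2 * j + 1) * θ + 2 * θ := by push_cast; ring
    refine ⟨y * (1 - 2 * sin θ ^ 2) - 2 * sin ((2 * j + 1) * θ) * sin θ, ?_, ?_⟩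
    · rw [harg, cos_add, cos_two_mul, sin_two_mul]
      linear_combination (2 * cos θ ^ 2 - 1) * hy - 2 * cos θ * y * sin_sq_add_cos_sq θ
    · rw [pow_succ', ← mulVec_mulVec, hpow, groverOperator_mulVec hs hg hQ hQg hQs]
      congr 3
      rw [harg, sin_add, cos_two_mul, sin_two_mul, ← hy]
      linear_combination -(2 * sin ((2 * j + 1) * θ) + 2 * y * sin θ) * sin_sq_add_cos_sq θ

open scoped ComplexOrder in
theorem groverOperator_pow_mulVec_eq_of_angle_eq_pi_div_two [DecidableEq n] (hs : star s ⬝ᵥ s = 1)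
    (hg : star g ⬝ᵥ g = 1) (hQ : Qᴴ = Q) (hQg : Q *ᵥ g = g) {θ : ℝ}
    (hQs : Q *ᵥ s = (sin θ : 𝕜) • g) {k : ℕ} (hk : (2 * k + 1) * θ = π / 2) :
    groverOperator s Q ^ k *ᵥ s = g := by
  obtain ⟨y, hy, hpow⟩ := groverOperator_pow_mulVec hs hg hQ hQg hQs k
  rw [hk, cos_pi_div_two] at hy
  -- the squared norm is `y ^ 2 * (1 - sin θ ^ 2) = (cos θ * y) ^ 2 = 0`
  have hb : (y : 𝕜) • (s - (sin θ : 𝕜) • g) = 0 := by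
    rw [← dotProduct_star_self_eq_zero, star_smul, smul_dotProduct, dotProduct_smul,
      star_sub_dotProduct_sub hs hg hQ hQg hQs, RCLike.star_def, RCLike.conj_ofReal, smul_eq_mul,
      smul_eq_mul, ← cos_sq']
    norm_cast
    linear_combination (cos θ * y) * hy
  rw [hpow, hb, hk, sin_pi_div_two]
  simp

end AmplitudeAmplification

theorem exact_amplitude_amplification_general
    (m : ℕ)
    (U P : Matrix (Fin m) (Fin m) ℂ)
    (hU : U * Uᴴ = 1) (hU' : Uᴴ * U = 1)
    (hP : P * P = P) (hP' : Pᴴ = P)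
    (v₀ ψ : Fin m → ℂ)
    (hv₀ : star v₀ ⬝ᵥ v₀ = 1) (hψ : star ψ ⬝ᵥ ψ = 1)
    (a : ℝ) (ha : 0 < a)
    (hstate : P.mulVec (U.mulVec v₀) = (a : ℂ) • ψ)
    (k : ℕ)
    (θ : ℝ) (hθ : θ = π / (4 * k + 2))
    (R : Matrix (Fin 2) (Fin 2) ℂ)
    (hR : R * Rᴴ = 1) (hR' : Rᴴ * R = 1)
    (hR00 : R 0 0 = ((Real.sin θ / a : ℝ) : ℂ))
    (e₀ : Fin 2 → ℂ) (he₀ : e₀ = ![1, 0])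
    (U' : Matrix (Fin 2 × Fin m) (Fin 2 × Fin m) ℂ) (hU'def : U' = R ⊗ₖ U)
    (w₀ : Fin 2 × Fin m → ℂ) (hw₀ : w₀ = fun p => e₀ p.1 * v₀ p.2)
    (W' : Matrix (Fin 2 × Fin m) (Fin 2 × Fin m) ℂ)
    (hW' : W' = U' * ((2 : ℂ) • Matrix.vecMulVec w₀ (star w₀) - 1) * U'ᴴ
            * (1 - (2 : ℂ) • (Matrix.vecMulVec e₀ (star e₀) ⊗ₖ P))) :
    (W' ^ k).mulVec (U'.mulVec w₀) = fun p => e₀ p.1 * ψ p.2 := by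
  have ha₀ : (a : ℂ) ≠ 0 := by exact_mod_cast ha.ne'
  have hPψ : P *ᵥ ψ = ψ := by
    refine smul_right_injective _ ha₀ ?_
    change (a : ℂ) • (P *ᵥ ψ) = (a : ℂ) • ψ
    rw [← mulVec_smul, ← hstate, mulVec_mulVec, hP]
  have hU'_unitary : U' ∈ unitary _ := hU'def ▸ kronecker_mem_unitary ⟨hR', hR⟩ ⟨hU', hU⟩
  have he₀_unit : star e₀ ⬝ᵥ e₀ = 1 := by simp [he₀, dotProduct]
  have hRe₀ : star e₀ ⬝ᵥ (R *ᵥ e₀) = R 0 0 := by simp [he₀, dotProduct, mulVec]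
  have hkθ : (2 * k + 1) * θ = π / 2 := by
    rw [hθ]
    field_simp
    ring
  rw [hW', mul_reflection_mul_conjTranspose hU'_unitary.2]
  refine AmplitudeAmplification.groverOperator_pow_mulVec_eq_of_angle_eq_pi_div_two ?_ ?_ ?_ ?_ ?_ hkθ
  · rw [star_mulVec_dotProduct_mulVec hU'_unitary.1, hw₀, star_mul_dotProduct_mul, he₀_unit,
      hv₀, one_mul]
  · rw [star_mul_dotProduct_mul, he₀_unit, hψ, one_mul]
  · rw [conjTranspose_kronecker, conjTranspose_vecMulVec, star_star, hP']
  · rw [kronecker_mulVec_mul, vecMulVec_mulVec, he₀_unit, hPψ]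
    simp
  · rw [hU'def, hw₀, kronecker_mulVec_mul, kronecker_mulVec_mul, vecMulVec_mulVec, hstate, hRe₀,
      hR00]
    funext p
    simp only [op_smul_eq_smul, Pi.smul_apply, smul_eq_mul, Complex.ofReal_div,
      RCLike.ofReal_eq_complex_ofReal]
    field_simp

/-- **Exact amplitude amplification.**
With `P (U v₀) = a ψ`, `k := ⌈π/(4 arcsin a) - 1/2⌉`, `θ := π/(4k+2)`, and a
single-qubit unitary `R` with `⟨0|R|0⟩ = sin(θ)/a`, the amplified walk
`W' := U' (2|0,v₀⟩⟨0,v₀| - I) U'ᴴ (I - 2 |0⟩⟨0| ⊗ P)` with `U' := R ⊗ U`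
satisfies `(W')ᵏ U' (e₀ ⊗ v₀) = e₀ ⊗ ψ`. -/
theorem exact_amplitude_amplification
    (m : ℕ) (hm : 1 ≤ m)
    (U P : Matrix (Fin m) (Fin m) ℂ)
    (hU : U * Uᴴ = 1) (hU' : Uᴴ * U = 1)
    (hP : P * P = P) (hP' : Pᴴ = P)
    (v₀ ψ : Fin m → ℂ)
    (hv₀ : star v₀ ⬝ᵥ v₀ = 1) (hψ : star ψ ⬝ᵥ ψ = 1)
    (a : ℝ) (ha : 0 < a) (ha1 : a ≤ 1)
    (hstate : P.mulVec (U.mulVec v₀) = (a : ℂ) • ψ)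
    (k : ℕ) (hk : k = ⌈π / (4 * Real.arcsin a) - 1 / 2⌉₊)
    (θ : ℝ) (hθ : θ = π / (4 * k + 2))
    (R : Matrix (Fin 2) (Fin 2) ℂ)
    (hR : R * Rᴴ = 1) (hR' : Rᴴ * R = 1)
    (hR00 : R 0 0 = ((Real.sin θ / a : ℝ) : ℂ))
    (e₀ : Fin 2 → ℂ) (he₀ : e₀ = ![1, 0])
    (U' : Matrix (Fin 2 × Fin m) (Fin 2 × Fin m) ℂ) (hU'def : U' = R ⊗ₖ U)
    (w₀ : Fin 2 × Fin m → ℂ) (hw₀ : w₀ = fun p => e₀ p.1 * v₀ p.2)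
    (W' : Matrix (Fin 2 × Fin m) (Fin 2 × Fin m) ℂ)
    (hW' : W' = U' * ((2 : ℂ) • Matrix.vecMulVec w₀ (star w₀) - 1) * U'ᴴ
            * (1 - (2 : ℂ) • (Matrix.vecMulVec e₀ (star e₀) ⊗ₖ P))) :
    (W' ^ k).mulVec (U'.mulVec w₀) = fun p => e₀ p.1 * ψ p.2 :=
  exact_amplitude_amplification_general m U P hU hU' hP hP' v₀ ψ hv₀ hψ a ha hstate k θ hθ R hR hR'
    hR00 e₀ he₀ U' hU'def w₀ hw₀ W' hW'
end

section
/- For every natural number n and every real y with −1 < y < 1, the second derivative of the Chebyshev polynomial of the first kind satisfies |T_n''(y)| ≤ n(n+1)/(1 − y²)^{3/2}. -/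
open Real Polynomial

/-! Put `y = cos θ`, so that `√(1 - y²) = sin θ`. Then `T_n' = n U_{n-1}` and
`U_{n-1}(cos θ) sin θ = sin nθ` give `|T_n'(y)| √(1 - y²) ≤ n`, and the Chebyshev differential
equation `(1 - y²) T_n'' = y T_n' - n² T_n` together with `|T_n(y)| ≤ 1` turns this into
`|T_n''(y)| (1 - y²)^{3/2} ≤ n + n²`. -/

namespace Polynomial.Chebyshev

theorem abs_eval_U_real_mul_sqrt_le_one (n : ℤ) {y : ℝ} (hy : |y| ≤ 1) :
    |(U ℝ n).eval y| * √(1 - y ^ 2) ≤ 1 := by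
  obtain ⟨hy₁, hy₂⟩ := abs_le.mp hy
  have h := U_real_cos (arccos y) n
  rw [cos_arccos hy₁ hy₂, sin_arccos] at h
  rw [← abs_of_nonneg (sqrt_nonneg (1 - y ^ 2)), ← abs_mul, h]
  exact abs_sin_le_one _

theorem abs_eval_derivative_T_real_mul_sqrt_le (n : ℤ) {y : ℝ} (hy : |y| ≤ 1) :
    |(derivative (T ℝ n)).eval y| * √(1 - y ^ 2) ≤ |(n : ℝ)| := by
  rw [T_derivative_eq_U, eval_mul, eval_intCast, abs_mul, mul_assoc]
  exact mul_le_of_le_one_right (abs_nonneg _) (abs_eval_U_real_mul_sqrt_le_one (n - 1) hy)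

theorem one_sub_sq_mul_eval_derivative_derivative_T (n : ℤ) (y : ℝ) :
    (1 - y ^ 2) * (derivative (derivative (T ℝ n))).eval y
      = y * (derivative (T ℝ n)).eval y - n ^ 2 * (T ℝ n).eval y := by
  simpa using congr_arg (eval y) (one_sub_X_sq_mul_derivative_derivative_T_eq_poly_in_T (R := ℝ) n)

theorem abs_eval_derivative_derivative_T_real_mul_sqrt_pow_le (n : ℤ) {y : ℝ} (hy : |y| ≤ 1) :
    |(derivative (derivative (T ℝ n))).eval y| * √(1 - y ^ 2) ^ 3
      ≤ |(n : ℝ)| * (|(n : ℝ)| + 1) := by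
  set s := √(1 - y ^ 2)
  have hs₀ : 0 ≤ s := sqrt_nonneg _
  have hs₁ : s ≤ 1 := sqrt_le_one.mpr (by nlinarith [sq_abs y, abs_nonneg y])
  have hs_sq : s ^ 2 = 1 - y ^ 2 := sq_sqrt (by nlinarith [sq_abs y, abs_nonneg y])
  calc |(derivative (derivative (T ℝ n))).eval y| * s ^ 3
      = |y * (derivative (T ℝ n)).eval y - n ^ 2 * (T ℝ n).eval y| * s := by
        rw [← one_sub_sq_mul_eval_derivative_derivative_T, ← hs_sq, abs_mul,
          abs_of_nonneg (by positivity : 0 ≤ s ^ 2)]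
        ring
    _ ≤ (|(derivative (T ℝ n)).eval y| + n ^ 2) * s := by
        gcongr
        refine (abs_sub _ _).trans (add_le_add ?_ ?_)
        · rw [abs_mul]; exact mul_le_of_le_one_left (abs_nonneg _) hy
        · rw [abs_mul, abs_pow, sq_abs]
          exact mul_le_of_le_one_right (sq_nonneg _) (abs_eval_T_real_le_one n hy)
    _ = |(derivative (T ℝ n)).eval y| * s + n ^ 2 * s := add_mul _ _ _
    _ ≤ |(n : ℝ)| + n ^ 2 * 1 := by
        gcongr
        exact abs_eval_derivative_T_real_mul_sqrt_le n hy
    _ = |(n : ℝ)| * (|(n : ℝ)| + 1) := by rw [mul_one, ← sq_abs]; ring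

end Polynomial.Chebyshev

/-- Bound on the second derivative of Chebyshev polynomials:
for `-1 < y < 1`, `|T_n''(y)| ≤ n(n+1)/(1-y²)^{3/2}`. -/
theorem chebyshev_T_second_derivative_bound (n : ℕ) (y : ℝ)
    (hy₁ : -1 < y) (hy₂ : y < 1) :
    |(Polynomial.derivative (Polynomial.derivative
        (Polynomial.Chebyshev.T ℝ (n : ℤ)))).eval y|
      ≤ (n : ℝ) * (n + 1) / (1 - y ^ 2) ^ ((3 : ℝ) / 2) := by
  have hpos : 0 < 1 - y ^ 2 := by nlinarith
  have hpow : (1 - y ^ 2) ^ ((3 : ℝ) / 2) = √(1 - y ^ 2) ^ 3 := by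
    rw [← rpow_natCast (√(1 - y ^ 2)) 3, sqrt_eq_rpow, ← rpow_mul hpos.le]
    norm_num
  rw [hpow, le_div_iff₀ (by positivity)]
  simpa using Polynomial.Chebyshev.abs_eval_derivative_derivative_T_real_mul_sqrt_pow_le n
    (abs_le.mpr ⟨hy₁.le, hy₂.le⟩)
end

section
/- Let N ≥ 1 be a natural number, let h, h̃ : Fin N → ℝ be two functions that are each not identically zero, and let δ ≥ 0 be such that |h(x) − h̃(x)| ≤ δ for every x. Then (∑_x h(x)·h̃(x))² ≥ (1 − N·δ² / min(∑_x h(x)², ∑_x h̃(x)²)) · (∑_x h(x)²) · (∑_x h̃(x)²). Equivalently, the fidelity |⟨Ψ_h|Ψ_{h̃}⟩|² between the normalized vectors Ψ_h := h/‖h‖₂ and Ψ_{h̃} := h̃/‖h̃‖₂ is at least 1 − N·δ² / min(‖h‖₂², ‖h̃‖₂²). -/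
open Finset
open scoped InnerProductSpace

/-!
The Gram determinant `‖x‖²‖y‖² - ⟪x, y⟫²` is unchanged when `y` is replaced by `x - y`, so it is
at most `‖x‖²‖x - y‖² ≤ max (‖x‖², ‖y‖²) ‖x - y‖²`, and
`max (‖x‖², ‖y‖²) = ‖x‖²‖y‖² / min (‖x‖², ‖y‖²)`. For `x = h`, `y = h̃` in `ℝ^N` the pointwise
bound gives `‖h - h̃‖² ≤ N δ²`.
-/

theorem sq_norm_mul_sq_norm_sub_sq_inner_le {E : Type*} [NormedAddCommGroup E]
    [InnerProductSpace ℝ E] (x y : E) :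
    ‖x‖ ^ 2 * ‖y‖ ^ 2 - ⟪x, y⟫_ℝ ^ 2 ≤ ‖x‖ ^ 2 * ‖x - y‖ ^ 2 := by
  have hy : ‖y‖ ^ 2 = ‖x‖ ^ 2 - 2 * ⟪x, x - y⟫_ℝ + ‖x - y‖ ^ 2 := by
    rw [← norm_sub_sq_real, sub_sub_cancel]
  have hxy : ⟪x, y⟫_ℝ = ‖x‖ ^ 2 - ⟪x, x - y⟫_ℝ := by
    rw [inner_sub_right, real_inner_self_eq_norm_sq, sub_sub_cancel]
  rw [hy, hxy]
  nlinarith [sq_nonneg ⟪x, x - y⟫_ℝ]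

theorem one_sub_div_min_mul_le_sq_inner {E : Type*} [NormedAddCommGroup E]
    [InnerProductSpace ℝ E] {x y : E} {c : ℝ} (hc : ‖x - y‖ ^ 2 ≤ c) :
    (1 - c / min (‖x‖ ^ 2) (‖y‖ ^ 2)) * ‖x‖ ^ 2 * ‖y‖ ^ 2 ≤ ⟪x, y⟫_ℝ ^ 2 := by
  have hprod : ‖x‖ ^ 2 * ‖y‖ ^ 2 = min (‖x‖ ^ 2) (‖y‖ ^ 2) * max (‖x‖ ^ 2) (‖y‖ ^ 2) :=
    (min_mul_max _ _).symm
  rcases (le_min (sq_nonneg ‖x‖) (sq_nonneg ‖y‖)).eq_or_lt with hmin | hmin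
  -- If one norm vanishes, so does the left side, whatever the junk value `c / 0`.
  · rw [mul_assoc, hprod, ← hmin, zero_mul, mul_zero]
    exact sq_nonneg _
  · have hmax : ‖x‖ ^ 2 * ‖x - y‖ ^ 2 ≤ max (‖x‖ ^ 2) (‖y‖ ^ 2) * c :=
      mul_le_mul (le_max_left _ _) hc (sq_nonneg _) ((sq_nonneg _).trans (le_max_left _ _))
    calc (1 - c / min (‖x‖ ^ 2) (‖y‖ ^ 2)) * ‖x‖ ^ 2 * ‖y‖ ^ 2
        = ‖x‖ ^ 2 * ‖y‖ ^ 2 - max (‖x‖ ^ 2) (‖y‖ ^ 2) * c := by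
          rw [mul_assoc, hprod]
          field_simp
      _ ≤ ⟪x, y⟫_ℝ ^ 2 := by linarith [sq_norm_mul_sq_norm_sub_sq_inner_le x y]

theorem EuclideanSpace.norm_sq_le_card_mul_sq {ι : Type*} [Fintype ι] {x : EuclideanSpace ℝ ι}
    {δ : ℝ} (hx : ∀ i, |x i| ≤ δ) : ‖x‖ ^ 2 ≤ Fintype.card ι * δ ^ 2 := by
  calc ‖x‖ ^ 2 = ∑ i, x i ^ 2 := EuclideanSpace.real_norm_sq_eq x
    _ ≤ ∑ _i : ι, δ ^ 2 :=
        sum_le_sum fun i _ => sq_abs (x i) ▸ pow_le_pow_left₀ (abs_nonneg _) (hx i) 2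
    _ = Fintype.card ι * δ ^ 2 := by simp

theorem fidelity_lower_bound_general (N : ℕ)
    (h ht : Fin N → ℝ)
    (δ : ℝ) (hclose : ∀ x, |h x - ht x| ≤ δ) :
    (∑ x, h x * ht x) ^ 2
      ≥ (1 - N * δ ^ 2 / min (∑ x, h x ^ 2) (∑ x, ht x ^ 2))
          * (∑ x, h x ^ 2) * (∑ x, ht x ^ 2) := by
  let ψ : EuclideanSpace ℝ (Fin N) := WithLp.toLp 2 h
  let ψt : EuclideanSpace ℝ (Fin N) := WithLp.toLp 2 ht
  have hdist : ‖ψ - ψt‖ ^ 2 ≤ N * δ ^ 2 := by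
    simpa using EuclideanSpace.norm_sq_le_card_mul_sq (x := ψ - ψt) hclose
  simpa [ψ, ψt, EuclideanSpace.real_norm_sq_eq, EuclideanSpace.inner_toLp_toLp, dotProduct,
    mul_comm] using one_sub_div_min_mul_le_sq_inner hdist

/-- **Fidelity lower bound from pointwise amplitude error.**
If `|h x - h̃ x| ≤ δ` for all `x`, then
`(∑ h h̃)² ≥ (1 - Nδ²/min(‖h‖₂², ‖h̃‖₂²)) ‖h‖₂² ‖h̃‖₂²`; equivalently, the fidelity
of the normalized states is at least `1 - Nδ²/min(‖h‖₂², ‖h̃‖₂²)`. -/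
theorem fidelity_lower_bound (N : ℕ) (hN : 1 ≤ N)
    (h ht : Fin N → ℝ) (hh : h ≠ 0) (hht : ht ≠ 0)
    (δ : ℝ) (hδ : 0 ≤ δ) (hclose : ∀ x, |h x - ht x| ≤ δ) :
    (∑ x, h x * ht x) ^ 2
      ≥ (1 - N * δ ^ 2 / min (∑ x, h x ^ 2) (∑ x, ht x ^ 2))
          * (∑ x, h x ^ 2) * (∑ x, ht x ^ 2) :=
  fidelity_lower_bound_general N h ht δ hclose
end

section
/- Define I₀(z) := ∑_{k=0}^∞ (z²/4)^k / (k!)². Then for every real β ≥ 0, one has I₀(2β) ≤ exp(β) · I₀(β). -/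
/-!
Odd moments of `cos` over `[0, π]` vanish and the even ones are the Wallis integrals
`∫₀^π cos^{2m} = π (2m)! / (4^m (m!)²)`, so integrating the exponential series termwise gives
Bessel's integral `π I₀(z) = ∫₀^π exp (z cos θ) dθ`. The inequality then holds pointwise under
the integral: `2β cos θ ≤ β + β cos θ` because `β ≥ 0` and `cos θ ≤ 1`.
-/

open Real

/-- The zeroth modified Bessel function of the first kind,
`I₀(z) = ∑ₖ (z²/4)ᵏ/(k!)²`. -/
noncomputable def besselI0 (z : ℝ) : ℝ :=
  ∑' k : ℕ, (z ^ 2 / 4) ^ k / ((Nat.factorial k : ℝ)) ^ 2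

open Nat intervalIntegral

theorem integral_cos_pow_two_mul (m : ℕ) :
    ∫ x in 0..π, cos x ^ (2 * m) = π * (2 * m)! / (4 ^ m * (m ! : ℝ) ^ 2) := by
  induction m with
  | zero => simp
  | succ m ih =>
    rw [show 2 * (m + 1) = 2 * m + 2 by ring, integral_cos_pow, ih,
      show 2 * m + 2 = (2 * m + 1) + 1 by ring, factorial_succ, factorial_succ, factorial_succ]
    simp only [sin_pi, sin_zero, mul_zero, sub_zero, zero_div, zero_add]
    push_cast
    field_simp
    ring

theorem integral_cos_pow_two_mul_add_one (m : ℕ) :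
    ∫ x in 0..π, cos x ^ (2 * m + 1) = 0 := by
  induction m with
  | zero => simp
  | succ m ih =>
    rw [show 2 * (m + 1) + 1 = (2 * m + 1) + 2 by ring, integral_cos_pow, ih]
    simp

theorem hasSum_intervalIntegral_exp {g : ℝ → ℝ} {C : ℝ} (hg : Continuous g)
    (hC : ∀ t, |g t| ≤ C) (a b : ℝ) :
    HasSum (fun n : ℕ => ∫ t in a..b, g t ^ n / n !) (∫ t in a..b, exp (g t)) := by
  refine hasSum_integral_of_dominated_convergence (fun n _ => C ^ n / n !)
    (fun n => (by fun_prop : Continuous _).aestronglyMeasurable)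
    (fun n => .of_forall fun t _ => ?_) (.of_forall fun _ _ => summable_pow_div_factorial C)
    intervalIntegrable_const (.of_forall fun t _ => ?_)
  · rw [norm_div, norm_pow, norm_natCast, norm_eq_abs]
    gcongr
    exact hC t
  · rw [exp_eq_exp_ℝ]
    exact NormedSpace.expSeries_div_hasSum_exp (g t)

theorem pi_mul_besselI0 (z : ℝ) :
    π * besselI0 z = ∫ θ in 0..π, exp (z * cos θ) := by
  have hsum := hasSum_intervalIntegral_exp (g := fun θ => z * cos θ) (C := |z|) (by fun_prop)
    (fun θ => by simpa [abs_mul] using mul_le_of_le_one_right (abs_nonneg z) (abs_cos_le_one θ)) 0 π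
  have hodd : ∀ n ∉ Set.range (2 * ·), ∫ θ in 0..π, (z * cos θ) ^ n / n ! = 0 := by
    intro n hn
    obtain ⟨m, rfl⟩ : Odd n := Nat.not_even_iff_odd.mp fun ⟨k, hk⟩ => hn ⟨k, by dsimp only; omega⟩
    simp_rw [integral_div, mul_pow, integral_const_mul, integral_cos_pow_two_mul_add_one]
    simp
  rw [← (mul_right_injective₀ two_ne_zero).hasSum_iff hodd] at hsum
  rw [besselI0, ← tsum_mul_left, ← hsum.tsum_eq]
  congr 1 with m
  simp only [Function.comp, integral_div, mul_pow, integral_const_mul, integral_cos_pow_two_mul]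
  rw [pow_mul, div_pow]
  field_simp

/-- For `β ≥ 0`, `I₀(2β) ≤ exp(β) · I₀(β)`. -/
theorem besselI0_two_mul_le (β : ℝ) (hβ : 0 ≤ β) :
    besselI0 (2 * β) ≤ Real.exp β * besselI0 β := by
  refine le_of_mul_le_mul_left ?_ pi_pos
  rw [mul_left_comm, pi_mul_besselI0, pi_mul_besselI0, ← integral_const_mul]
  refine integral_mono pi_pos.le ((by fun_prop : Continuous _).intervalIntegrable _ _)
    ((by fun_prop : Continuous _).intervalIntegrable _ _) fun θ => ?_
  have hcos : β * cos θ ≤ β := mul_le_of_le_one_right hβ (cos_le_one θ)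
  rw [← exp_add]
  exact exp_le_exp.mpr (by linarith)
end

section
/- Define I₀(z) := ∑_{k=0}^∞ (z²/4)^k / (k!)². Then for every real β ≥ 0 and every x ∈ [−1, 1], the Kaiser window function W_β(x) := I₀(β·√(1 − x²))/I₀(β) satisfies W_β(x) ≥ 1 − β·x²/2; equivalently, I₀(β·√(1 − x²)) ≥ (1 − β·x²/2)·I₀(β). -/
open Real Set

open Nat in
noncomputable def besselI0Term (c : ℝ) (k : ℕ) : ℝ :=
  c ^ k / (k ! : ℝ) ^ 2

lemma besselI0_eq_tsum (z : ℝ) : besselI0 z = ∑' k, besselI0Term (z ^ 2 / 4) k := rfl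

@[simp]
lemma besselI0Term_zero (c : ℝ) : besselI0Term c 0 = 1 := by
  simp [besselI0Term]

lemma besselI0Term_nonneg {c : ℝ} (hc : 0 ≤ c) (k : ℕ) : 0 ≤ besselI0Term c k := by
  unfold besselI0Term
  positivity

lemma besselI0Term_succ (c : ℝ) (k : ℕ) :
    besselI0Term c (k + 1) = besselI0Term c k * c / (k + 1) ^ 2 := by
  simp only [besselI0Term, Nat.factorial_succ]
  push_cast
  field_simp
  ring

lemma besselI0Term_mul_pow (c s : ℝ) (k : ℕ) :
    besselI0Term c k * s ^ k = besselI0Term (c * s) k := by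
  simp only [besselI0Term]
  ring

lemma norm_natCast_mul_besselI0Term_le (c : ℝ) (k : ℕ) :
    ‖(k : ℝ) * besselI0Term c k‖ ≤ |c| ^ k / k.factorial := by
  have hk : (k : ℝ) ≤ k.factorial := by exact_mod_cast k.self_le_factorial
  have hpos : (0 : ℝ) < k.factorial := by exact_mod_cast k.factorial_pos
  rw [norm_mul, Real.norm_natCast, besselI0Term, norm_div, norm_pow, norm_pow, Real.norm_natCast,
    Real.norm_eq_abs, mul_div_assoc', div_le_div_iff₀ (by positivity) hpos, sq, ← mul_assoc,
    mul_comm (k : ℝ)]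
  gcongr

lemma norm_besselI0Term_le (c : ℝ) (k : ℕ) : ‖besselI0Term c k‖ ≤ |c| ^ k / k.factorial := by
  have hpos : (1 : ℝ) ≤ k.factorial := by exact_mod_cast k.factorial_pos
  rw [besselI0Term, norm_div, norm_pow, norm_pow, Real.norm_natCast, Real.norm_eq_abs, sq]
  exact div_le_div_of_nonneg_left (by positivity) (by positivity) (le_mul_of_one_le_left
    (by positivity) hpos)

lemma summable_besselI0Term (c : ℝ) : Summable (besselI0Term c) :=
  (Real.summable_pow_div_factorial |c|).of_norm_bounded (norm_besselI0Term_le c)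

lemma summable_natCast_mul_besselI0Term (c : ℝ) :
    Summable fun k : ℕ ↦ (k : ℝ) * besselI0Term c k :=
  (Real.summable_pow_div_factorial |c|).of_norm_bounded (norm_natCast_mul_besselI0Term_le c)

lemma one_le_besselI0 (z : ℝ) : 1 ≤ besselI0 z := by
  rw [besselI0_eq_tsum, ← besselI0Term_zero (z ^ 2 / 4)]
  exact (summable_besselI0Term _).le_tsum 0 fun k _ ↦ besselI0Term_nonneg (by positivity) k

lemma besselI0_mul_sqrt (β : ℝ) {s : ℝ} (hs : 0 ≤ s) :
    besselI0 (β * √s) = ∑' k, besselI0Term (β ^ 2 / 4) k * s ^ k := by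
  rw [besselI0_eq_tsum, mul_pow, sq_sqrt hs, mul_div_right_comm]
  simp_rw [besselI0Term_mul_pow]

lemma succ_mul_besselI0Term_succ_le {β : ℝ} (hβ : 0 ≤ β) (k : ℕ) :
    (k + 1) * besselI0Term (β ^ 2 / 4) (k + 1) ≤
      β / 4 * (besselI0Term (β ^ 2 / 4) (k + 1) + besselI0Term (β ^ 2 / 4) k) := by
  have ha := besselI0Term_nonneg (by positivity : 0 ≤ β ^ 2 / 4) k
  rw [besselI0Term_succ]
  set a := besselI0Term (β ^ 2 / 4) k
  have hm : (0 : ℝ) < k + 1 := by positivity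
  have hgap : β / 4 * (a * (β ^ 2 / 4) / (k + 1) ^ 2 + a) - (k + 1) * (a * (β ^ 2 / 4) / (k + 1) ^ 2)
      = a * β * (β / 2 - (k + 1)) ^ 2 / (4 * (k + 1) ^ 2) := by
    field_simp
    ring
  have : 0 ≤ a * β * (β / 2 - (k + 1)) ^ 2 / (4 * (k + 1) ^ 2) := by positivity
  linarith

lemma tsum_natCast_mul_besselI0Term_le {β : ℝ} (hβ : 0 ≤ β) :
    ∑' k : ℕ, (k : ℝ) * besselI0Term (β ^ 2 / 4) k ≤ β / 2 * besselI0 β := by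
  set a := besselI0Term (β ^ 2 / 4)
  have ha : Summable a := summable_besselI0Term _
  have ha' : Summable fun k ↦ a (k + 1) := (summable_nat_add_iff 1).mpr ha
  have hka : Summable fun k : ℕ ↦ (k : ℝ) * a k := summable_natCast_mul_besselI0Term _
  have hka' : Summable fun k : ℕ ↦ (k + 1 : ℝ) * a (k + 1) := by
    simpa using (summable_nat_add_iff 1).mpr hka
  have hshift : ∑' k, a (k + 1) = besselI0 β - 1 := by
    rw [besselI0_eq_tsum, ha.tsum_eq_zero_add, show a 0 = 1 from besselI0Term_zero _]
    ring
  calc ∑' k : ℕ, (k : ℝ) * a k = ∑' k : ℕ, (k + 1 : ℝ) * a (k + 1) := by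
        rw [hka.tsum_eq_zero_add]
        simp
    _ ≤ ∑' k, β / 4 * (a (k + 1) + a k) :=
        hka'.tsum_le_tsum (succ_mul_besselI0Term_succ_le hβ) ((ha'.add ha).mul_left _)
    _ = β / 4 * (besselI0 β - 1 + besselI0 β) := by
        rw [tsum_mul_left, ha'.tsum_add ha, hshift, besselI0_eq_tsum]
    _ ≤ β / 2 * besselI0 β := by linarith

lemma tsum_sub_mul_tsum_le_tsum_mul_pow {a : ℕ → ℝ} (ha₀ : ∀ k, 0 ≤ a k) (ha : Summable a)
    (hka : Summable fun k : ℕ ↦ (k : ℝ) * a k) {t : ℝ} (ht₀ : 0 ≤ t) (ht₂ : t ≤ 2) :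
    ∑' k, a k - t * ∑' k : ℕ, (k : ℝ) * a k ≤ ∑' k, a k * (1 - t) ^ k := by
  have habs : |1 - t| ≤ 1 := abs_le.mpr ⟨by linarith, by linarith⟩
  have hpow : Summable fun k ↦ a k * (1 - t) ^ k := ha.of_norm_bounded fun k ↦ by
    rw [norm_mul, norm_pow, Real.norm_of_nonneg (ha₀ k), Real.norm_eq_abs]
    exact mul_le_of_le_one_right (ha₀ k) (pow_le_one₀ (abs_nonneg _) habs)
  rw [← tsum_mul_left, ← ha.tsum_sub (hka.mul_left t)]
  refine (ha.sub (hka.mul_left t)).tsum_le_tsum (fun k ↦ ?_) hpow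
  have hbernoulli := one_add_mul_le_pow (by linarith : -2 ≤ -t) k
  rw [← sub_eq_add_neg] at hbernoulli
  nlinarith [mul_le_mul_of_nonneg_left hbernoulli (ha₀ k)]

/-- **Parabola lower bound for the Kaiser window.** For `β ≥ 0` and `x ∈ [-1,1]`,
`W_β(x) = I₀(β√(1-x²))/I₀(β) ≥ 1 - βx²/2`; equivalently
`I₀(β√(1-x²)) ≥ (1 - βx²/2)·I₀(β)`. -/
theorem kaiserWindow_ge_one_sub (β : ℝ) (hβ : 0 ≤ β) (x : ℝ)
    (hx : x ∈ Set.Icc (-1 : ℝ) 1) :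
    1 - β * x ^ 2 / 2 ≤ besselI0 (β * Real.sqrt (1 - x ^ 2)) / besselI0 β ∧
    (1 - β * x ^ 2 / 2) * besselI0 β ≤ besselI0 (β * Real.sqrt (1 - x ^ 2)) := by
  have hx2 : x ^ 2 ≤ 1 := sq_le_one_iff_abs_le_one x |>.mpr (abs_le.mpr hx)
  have hlower : (1 - β * x ^ 2 / 2) * besselI0 β ≤ besselI0 (β * √(1 - x ^ 2)) :=
    calc (1 - β * x ^ 2 / 2) * besselI0 β = besselI0 β - x ^ 2 * (β / 2 * besselI0 β) := by ring
      _ ≤ besselI0 β - x ^ 2 * ∑' k : ℕ, (k : ℝ) * besselI0Term (β ^ 2 / 4) k := by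
        gcongr
        exact tsum_natCast_mul_besselI0Term_le hβ
      _ ≤ ∑' k, besselI0Term (β ^ 2 / 4) k * (1 - x ^ 2) ^ k :=
        tsum_sub_mul_tsum_le_tsum_mul_pow (besselI0Term_nonneg (by positivity))
          (summable_besselI0Term _) (summable_natCast_mul_besselI0Term _) (sq_nonneg x)
          (by linarith)
      _ = besselI0 (β * √(1 - x ^ 2)) := (besselI0_mul_sqrt β (by linarith)).symm
  exact ⟨(le_div_iff₀ (one_pos.trans_le (one_le_besselI0 β))).mpr hlower, hlower⟩
end

section
/- Let β ≥ 0 and let f : ℝ → ℝ be continuous on [−1, 1] with f(x) ≥ 1 − β·x²/2 for every x ∈ [−1, 1]. Then: (i) if β ≤ 2, one has ∫_{−1}^{1} f(x)² dx ≥ 1; and (ii) if β ≥ 2, one has ∫_{−1}^{1} f(x)² dx ≥ √(2/β). -/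
/-!
On `[-c, c]` with `β c² ≤ 2` the parabola `1 - βx²/2` is nonnegative, so there `f² ≥ (1 - βx²/2)²`,
and `∫_{-1}^{1} f² ≥ ∫_{-c}^{c} (1 - βx²/2)² = 2c - 2βc³/3 + β²c⁵/10`. For `β ≤ 2` take `c = 1`;
for `β ≥ 2` take `c = √(2/β)`, where the bound becomes `16c/15`.
-/

open Real Set intervalIntegral

theorem integral_sq_le_integral_sq_of_le {f g : ℝ → ℝ} {a b c d : ℝ}
    (hca : c ≤ a) (hab : a ≤ b) (hbd : b ≤ d)
    (hf : IntervalIntegrable (fun x => f x ^ 2) MeasureTheory.volume c d)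
    (hg : ContinuousOn g (Icc a b))
    (hg0 : ∀ x ∈ Icc a b, 0 ≤ g x) (hgf : ∀ x ∈ Icc a b, g x ≤ f x) :
    ∫ x in a..b, g x ^ 2 ≤ ∫ x in c..d, f x ^ 2 := by
  have hf_ab : IntervalIntegrable (fun x => f x ^ 2) MeasureTheory.volume a b :=
    hf.mono_set (by rw [uIcc_of_le hab, uIcc_of_le (hca.trans (hab.trans hbd))]
                    exact Icc_subset_Icc hca hbd)
  have hg_ab : IntervalIntegrable (fun x => g x ^ 2) MeasureTheory.volume a b :=
    (hg.pow 2).intervalIntegrable_of_Icc hab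
  calc ∫ x in a..b, g x ^ 2
      ≤ ∫ x in a..b, f x ^ 2 :=
        integral_mono_on hab hg_ab hf_ab fun x hx => pow_le_pow_left₀ (hg0 x hx) (hgf x hx) 2
    _ ≤ ∫ x in c..d, f x ^ 2 :=
        integral_mono_interval hca hab hbd (MeasureTheory.ae_of_all _ fun x => sq_nonneg (f x)) hf

theorem integral_one_sub_mul_sq_div_two_sq (β c : ℝ) :
    ∫ x in -c..c, (1 - β * x ^ 2 / 2) ^ 2 = 2 * c - 2 * β * c ^ 3 / 3 + β ^ 2 * c ^ 5 / 10 := by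
  have h (x : ℝ) : (1 - β * x ^ 2 / 2) ^ 2 = 1 - β * x ^ 2 + β ^ 2 / 4 * x ^ 4 := by ring
  simp only [h]
  rw [integral_add, integral_sub, integral_const_mul, integral_const_mul, integral_pow,
    integral_pow, integral_one]
  · ring
  all_goals exact Continuous.intervalIntegrable (by fun_prop) _ _

theorem one_sub_mul_sq_div_two_nonneg {β c x : ℝ} (hβc : β * c ^ 2 ≤ 2) (hx : x ∈ Icc (-c) c) :
    0 ≤ 1 - β * x ^ 2 / 2 := by
  rcases le_total 0 β with hβ | hβ
  · nlinarith [mul_le_mul_of_nonneg_left (sq_le_sq' hx.1 hx.2) hβ]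
  · nlinarith [mul_nonpos_of_nonpos_of_nonneg hβ (sq_nonneg x)]

theorem le_integral_sq_of_one_sub_mul_sq_div_two_le {β c : ℝ} {f : ℝ → ℝ}
    (hf : ContinuousOn f (Icc (-1) 1)) (hlb : ∀ x ∈ Icc (-1 : ℝ) 1, 1 - β * x ^ 2 / 2 ≤ f x)
    (hc0 : 0 ≤ c) (hc1 : c ≤ 1) (hβc : β * c ^ 2 ≤ 2) :
    2 * c - 2 * β * c ^ 3 / 3 + β ^ 2 * c ^ 5 / 10 ≤ ∫ x in (-1 : ℝ)..1, f x ^ 2 := by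
  have hsub : Icc (-c) c ⊆ Icc (-1) 1 := Icc_subset_Icc (neg_le_neg hc1) hc1
  rw [← integral_one_sub_mul_sq_div_two_sq]
  exact integral_sq_le_integral_sq_of_le (neg_le_neg hc1) (by linarith) hc1
    ((hf.pow 2).intervalIntegrable_of_Icc (by norm_num)) (by fun_prop)
    (fun x hx => one_sub_mul_sq_div_two_nonneg hβc hx) (fun x hx => hlb x (hsub hx))

theorem filling_fraction_lower_bound_general (β : ℝ) (f : ℝ → ℝ)
    (hf : ContinuousOn f (Set.Icc (-1 : ℝ) 1))
    (hlb : ∀ x ∈ Set.Icc (-1 : ℝ) 1, 1 - β * x ^ 2 / 2 ≤ f x) :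
    (β ≤ 2 → 1 ≤ ∫ x in (-1 : ℝ)..1, f x ^ 2) ∧
    (2 ≤ β → Real.sqrt (2 / β) ≤ ∫ x in (-1 : ℝ)..1, f x ^ 2) := by
  constructor
  · intro hβ2
    have h := le_integral_sq_of_one_sub_mul_sq_div_two_le hf hlb zero_le_one le_rfl
      (by linarith)
    nlinarith [sq_nonneg (β - 2)]
  · intro hβ2
    set c := √(2 / β)
    have hβc : β * c ^ 2 = 2 := by
      rw [sq_sqrt (by positivity)]
      field_simp
    have hc1 : c ≤ 1 := sqrt_le_one.mpr ((div_le_one (by linarith)).mpr hβ2)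
    have h := le_integral_sq_of_one_sub_mul_sq_div_two_le hf hlb (sqrt_nonneg _) hc1 hβc.le
    have hbound : 2 * c - 2 * β * c ^ 3 / 3 + β ^ 2 * c ^ 5 / 10 = 16 * c / 15 := by
      linear_combination (-(2 * c / 3) + (β * c ^ 2 + 2) * c / 10) * hβc
    rw [hbound] at h
    linarith [sqrt_nonneg (2 / β)]

/-- **L2-norm lower bound for functions dominating the parabola `1 - βx²/2`.**
If `f` is continuous on `[-1, 1]` and `f(x) ≥ 1 - βx²/2` there, then
`∫_{-1}^{1} f(x)² dx ≥ 1` for `β ≤ 2`, and `∫_{-1}^{1} f(x)² dx ≥ √(2/β)`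
for `β ≥ 2`. -/
theorem filling_fraction_lower_bound (β : ℝ) (hβ : 0 ≤ β) (f : ℝ → ℝ)
    (hf : ContinuousOn f (Set.Icc (-1 : ℝ) 1))
    (hlb : ∀ x ∈ Set.Icc (-1 : ℝ) 1, 1 - β * x ^ 2 / 2 ≤ f x) :
    (β ≤ 2 → 1 ≤ ∫ x in (-1 : ℝ)..1, f x ^ 2) ∧
    (2 ≤ β → Real.sqrt (2 / β) ≤ ∫ x in (-1 : ℝ)..1, f x ^ 2) :=
  filling_fraction_lower_bound_general β f hf hlb
end
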